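/- The polynomial P₄(X) = X + X² + (4/5)X³ + (2/5)X⁴ is admissible: it has nonnegative coefficients, P₄(0) = 0, and Re{P₄(1/z)} ≥ 0 for every complex number z with Re z ≥ 1. -/

import Mathlib

/-!
For `Re z ≥ 1` the point `w = 1/z` lies in the closed disc `|w|² ≤ Re w` (the image of the
half-plane under inversion). On that disc `Re P₄(w)` is a product of two nonnegative factors
plus `(16/5) (Re w)⁴`: the first factor is `Re w - |w|²`, and in the second one the bound
`(Im w)² ≤ Re w - (Re w)²` leaves `1 + (8/5) a + (16/5) a²` with `a = Re w`, which has no real root.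
-/

open Complex

noncomputable def P4 (X : ℂ) : ℂ := X + X ^ 2 + (4 / 5) * X ^ 3 + (2 / 5) * X ^ 4

theorem Complex.normSq_inv_le_re_inv {z : ℂ} (hz : 1 ≤ z.re) : normSq z⁻¹ ≤ z⁻¹.re := by
  rw [map_inv₀, inv_re, ← one_div]
  exact div_le_div_of_nonneg_right hz (normSq_nonneg z)

theorem P4_re_eq (w : ℂ) :
    (P4 w).re = (w.re - normSq w) * (1 + 2 * w.re + 14 / 5 * w.re ^ 2 - 2 / 5 * w.im ^ 2)
      + 16 / 5 * w.re ^ 4 := by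
  simp only [P4, pow_succ, pow_zero, one_mul, add_re, mul_re, mul_im, normSq_apply,
    div_ofNat_re, div_ofNat_im, re_ofNat, im_ofNat]
  ring

theorem P4_re_nonneg_of_normSq_le_re {w : ℂ} (h : normSq w ≤ w.re) : 0 ≤ (P4 w).re := by
  have him : w.im ^ 2 ≤ w.re - w.re ^ 2 := by rw [normSq_apply] at h; nlinarith
  have hfactor : 0 ≤ 1 + 2 * w.re + 14 / 5 * w.re ^ 2 - 2 / 5 * w.im ^ 2 := by
    nlinarith [sq_nonneg (1 + 4 / 5 * w.re), sq_nonneg w.re]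
  rw [P4_re_eq]
  exact add_nonneg (mul_nonneg (sub_nonneg.mpr h) hfactor) (by positivity)

/-- P₄ is admissible: P₄(0) = 0 and Re P₄(1/z) ≥ 0 whenever Re z ≥ 1. -/
theorem P4_admissible :
    P4 0 = 0 ∧ ∀ z : ℂ, 1 ≤ z.re → 0 ≤ (P4 (1 / z)).re := by
  refine ⟨by simp [P4], fun z hz => ?_⟩
  rw [one_div]
  exact P4_re_nonneg_of_normSq_le_re (normSq_inv_le_re_inv hz)
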